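/- Let b : ℝ → ℝ be locally integrable, let I = (x₀ − r, x₀ + r) be a bounded interval, let α be a median of b on I, let 1 < p < ∞, and let I₁ := {x ∈ I : b(x) > α}, I₂ := {x ∈ I : b(x) < α}, a := (|I₁| − |I₂|)/|I|, and f := |I|^{−1/p}(χ_{I₁} − χ_{I₂} − a χ_I). Then: (i) ∫_ℝ f = 0; (ii) |a| ≤ 1/2; (iii) supp f ⊆ I; (iv) f(y)(b(y) − α) ≥ 0 for all y ∈ I; (v) (1/2)|I|^{−1/p} ≤ |f(y)| ≤ (5/2)|I|^{−1/p} for all y ∈ I₁ ∪ I₂; and (vi) ‖f‖_{L^p(ℝ)} ≤ 5/2. -/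

import Mathlib

open MeasureTheory Filter Set
open scoped ENNReal

/-- `α` is a median of `b` on the bounded interval `I`. -/
def IsMedian (b : ℝ → ℝ) (I : Set ℝ) (α : ℝ) : Prop :=
  volume {x | x ∈ I ∧ α < b x} ≤ volume I / 2 ∧
  volume {x | x ∈ I ∧ b x < α} ≤ volume I / 2

/-!
On `I`, `χ_{I₁} - χ_{I₂} = sign (b - α)`, so `f = c (sign (b - α) - a)` there, with
`c = |I|^{-1/p}`, and `f = 0` off `I`. The median condition gives `|I₁|, |I₂| ≤ |I|/2`, hence
`|a| ≤ 1/2`, and the pointwise claims follow from `1 - |a| ≤ |sign t - a| ≤ 1 + |a|` (the left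
inequality for `t ≠ 0`) and `(sign t - a) t ≥ 0`. Since `a` is the mean of `χ_{I₁} - χ_{I₂}`
over `I`, `∫ f = 0`; and `‖f‖_p ≤ |I|^{1/p} sup |f|`.
-/

namespace Real

lemma abs_sign_sub_le (t a : ℝ) : |sign t - a| ≤ 1 + |a| := by
  have : |sign t| ≤ 1 := by rcases sign_apply_eq t with h | h | h <;> simp [h]
  linarith [abs_sub (sign t) a]

lemma one_sub_abs_le_abs_sign_sub {t : ℝ} (ht : t ≠ 0) (a : ℝ) : 1 - |a| ≤ |sign t - a| := by
  refine le_trans ?_ (abs_sub_abs_le_abs_sub _ _)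
  rcases sign_apply_eq_of_ne_zero t ht with h | h <;> simp [h]

lemma sign_sub_mul_self_nonneg (t : ℝ) {a : ℝ} (ha : |a| ≤ 1) : 0 ≤ (sign t - a) * t := by
  obtain ⟨ha₁, ha₂⟩ := abs_le.1 ha
  rcases lt_trichotomy t 0 with h | rfl | h
  · rw [sign_of_neg h]; nlinarith
  · simp
  · rw [sign_of_pos h]; nlinarith

end Real

section Indicator

variable {X : Type*} [MeasurableSpace X] {μ : Measure X}

lemma abs_measureReal_sub_le_half {I s t : Set X} (hI : μ I ≠ ∞)
    (hs : μ s ≤ μ I / 2) (ht : μ t ≤ μ I / 2) :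
    |μ.real s - μ.real t| ≤ μ.real I / 2 := by
  have half_le {u : Set X} (hu : μ u ≤ μ I / 2) : μ.real u ≤ μ.real I / 2 := by
    simpa [measureReal_def, ENNReal.toReal_div] using
      ENNReal.toReal_mono (ENNReal.div_ne_top hI two_ne_zero) hu
  exact abs_sub_le_of_nonneg_of_le measureReal_nonneg (half_le hs) measureReal_nonneg (half_le ht)

lemma integral_indicator_one₀ {s : Set X} (hs : NullMeasurableSet s μ) :
    ∫ x, s.indicator (fun _ => (1 : ℝ)) x ∂μ = μ.real s := by
  simp [integral_indicator₀ hs]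

lemma integrable_indicator_one₀ {s : Set X} (hs : NullMeasurableSet s μ) (hμs : μ s ≠ ∞) :
    Integrable (s.indicator fun _ => (1 : ℝ)) μ :=
  (integrableOn_const hμs).integrable_indicator₀ hs

lemma integral_indicator_sub_indicator_sub_mean_eq_zero {s t u : Set X} {a : ℝ}
    (hs : NullMeasurableSet s μ) (ht : NullMeasurableSet t μ) (hu : NullMeasurableSet u μ)
    (hμs : μ s ≠ ∞) (hμt : μ t ≠ ∞) (hμu : μ u ≠ ∞) (ha : a * μ.real u = μ.real s - μ.real t) :
    ∫ x, (s.indicator (fun _ => (1 : ℝ)) x - t.indicator (fun _ => (1 : ℝ)) x -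
      a * u.indicator (fun _ => (1 : ℝ)) x) ∂μ = 0 := by
  have hχs := integrable_indicator_one₀ hs hμs
  have hχt := integrable_indicator_one₀ ht hμt
  rw [integral_sub (f := fun x => _ - _) (hχs.sub hχt)
      ((integrable_indicator_one₀ hu hμu).const_mul a), integral_sub hχs hχt, integral_const_mul,
    integral_indicator_one₀ hs, integral_indicator_one₀ ht, integral_indicator_one₀ hu, ha,
    sub_self]

lemma eLpNorm_le_of_support_subset {F : Type*} [NormedAddCommGroup F] {f : X → F} {s : Set X}
    (hs : MeasurableSet s) (hf : Function.support f ⊆ s) {C : ℝ} (hC : ∀ x, ‖f x‖ ≤ C)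
    (p : ℝ≥0∞) : eLpNorm f p μ ≤ μ s ^ p.toReal⁻¹ * ENNReal.ofReal C := by
  rw [← indicator_eq_self.2 hf, eLpNorm_indicator_eq_eLpNorm_restrict hs]
  simpa [Measure.restrict_apply_univ] using
    eLpNorm_le_of_ae_bound (μ := μ.restrict s) (p := p) (ae_of_all _ hC)

end Indicator

lemma ENNReal.ofReal_rpow_inv_mul_ofReal_mul_rpow_neg_one_div {x : ℝ} (hx : 0 < x) (p C : ℝ) :
    ENNReal.ofReal x ^ p⁻¹ * ENNReal.ofReal (C * x ^ (-1 / p)) = ENNReal.ofReal C := by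
  rw [ENNReal.ofReal_rpow_of_pos hx, ← ENNReal.ofReal_mul (by positivity), mul_left_comm,
    ← Real.rpow_add hx, show p⁻¹ + -1 / p = 0 by ring, Real.rpow_zero, mul_one]

section MedianTestFunction

variable {X : Type*} (I : Set X) (b : X → ℝ) (α a c : ℝ)

noncomputable def medianTestFunction (y : X) : ℝ :=
  c * ({x | x ∈ I ∧ α < b x}.indicator (fun _ => 1) y -
    {x | x ∈ I ∧ b x < α}.indicator (fun _ => 1) y - a * I.indicator (fun _ => 1) y)

variable {I b α a c}

lemma indicator_one_sub_indicator_one_eq_sign {y : X} (hy : y ∈ I) :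
    {x | x ∈ I ∧ α < b x}.indicator (fun _ => (1 : ℝ)) y -
        {x | x ∈ I ∧ b x < α}.indicator (fun _ => (1 : ℝ)) y = Real.sign (b y - α) := by
  rcases lt_trichotomy (b y) α with h | h | h
  · simp [hy, h, h.not_gt, Real.sign_of_neg (sub_neg.2 h)]
  · simp [h]
  · simp [hy, h, h.not_gt, Real.sign_of_pos (sub_pos.2 h)]

lemma medianTestFunction_of_mem {y : X} (hy : y ∈ I) :
    medianTestFunction I b α a c y = c * (Real.sign (b y - α) - a) := by
  simp only [medianTestFunction, indicator_of_mem hy, mul_one,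
    indicator_one_sub_indicator_one_eq_sign hy]

lemma medianTestFunction_of_notMem {y : X} (hy : y ∉ I) : medianTestFunction I b α a c y = 0 := by
  simp [medianTestFunction, hy]

lemma support_medianTestFunction_subset : Function.support (medianTestFunction I b α a c) ⊆ I :=
  fun _ hy => not_imp_comm.1 medianTestFunction_of_notMem hy

lemma medianTestFunction_mul_nonneg (ha : |a| ≤ 1) (hc : 0 ≤ c) (y : X) :
    0 ≤ medianTestFunction I b α a c y * (b y - α) := by
  by_cases hy : y ∈ I
  · rw [medianTestFunction_of_mem hy, mul_assoc]
    exact mul_nonneg hc (Real.sign_sub_mul_self_nonneg _ ha)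
  · simp [medianTestFunction_of_notMem hy]

lemma abs_medianTestFunction_le (hc : 0 ≤ c) (y : X) :
    |medianTestFunction I b α a c y| ≤ (1 + |a|) * c := by
  by_cases hy : y ∈ I
  · rw [medianTestFunction_of_mem hy, abs_mul, abs_of_nonneg hc, mul_comm (1 + |a|)]
    exact mul_le_mul_of_nonneg_left (Real.abs_sign_sub_le _ a) hc
  · rw [medianTestFunction_of_notMem hy, abs_zero]
    positivity

lemma le_abs_medianTestFunction (hc : 0 ≤ c) {y : X}
    (hy : y ∈ {x | x ∈ I ∧ α < b x} ∪ {x | x ∈ I ∧ b x < α}) :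
    (1 - |a|) * c ≤ |medianTestFunction I b α a c y| := by
  have hbα : b y - α ≠ 0 :=
    hy.elim (fun h => sub_ne_zero.2 h.2.ne') (fun h => sub_ne_zero.2 h.2.ne)
  rw [medianTestFunction_of_mem (hy.elim And.left And.left), abs_mul, abs_of_nonneg hc,
    mul_comm (1 - |a|)]
  exact mul_le_mul_of_nonneg_left (Real.one_sub_abs_le_abs_sign_sub hbα a) hc

variable [MeasurableSpace X] {μ : Measure X}

lemma integral_medianTestFunction (hI : NullMeasurableSet I μ) (hμI : μ I ≠ ∞)
    (hb : AEMeasurable b μ)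
    (ha : a * μ.real I = μ.real {x | x ∈ I ∧ α < b x} - μ.real {x | x ∈ I ∧ b x < α}) :
    ∫ y, medianTestFunction I b α a c y ∂μ = 0 := by
  have hfin {s : Set X} (hs : s ⊆ I) : μ s ≠ ∞ := measure_ne_top_of_subset hs hμI
  have hI₁ : NullMeasurableSet {x | x ∈ I ∧ α < b x} μ :=
    hI.inter (nullMeasurableSet_lt aemeasurable_const hb)
  have hI₂ : NullMeasurableSet {x | x ∈ I ∧ b x < α} μ :=
    hI.inter (nullMeasurableSet_lt hb aemeasurable_const)
  unfold medianTestFunction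
  rw [integral_const_mul, integral_indicator_sub_indicator_sub_mean_eq_zero hI₁ hI₂ hI
      (hfin fun _ h => h.1) (hfin fun _ h => h.1) hμI ha, mul_zero]

lemma eLpNorm_medianTestFunction_le (hI : MeasurableSet I) (hc : 0 ≤ c) (p : ℝ≥0∞) :
    eLpNorm (medianTestFunction I b α a c) p μ ≤
      μ I ^ p.toReal⁻¹ * ENNReal.ofReal ((1 + |a|) * c) :=
  eLpNorm_le_of_support_subset hI support_medianTestFunction_subset
    (fun y => abs_medianTestFunction_le hc y) p

end MedianTestFunction

/-- Properties of the test function `f = |I|^{-1/p}(χ_{I₁} - χ_{I₂} - a χ_I)` built from a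
median `α` of `b` on `I`. -/
theorem median_test_function_properties
    (b : ℝ → ℝ) (hb : MeasureTheory.LocallyIntegrable b volume)
    (x₀ r : ℝ) (hr : 0 < r)
    (I : Set ℝ) (hI : I = Set.Ioo (x₀ - r) (x₀ + r))
    (α : ℝ) (hα : IsMedian b I α)
    (p : ℝ) (hp : 1 < p)
    (I₁ I₂ : Set ℝ) (a : ℝ) (f : ℝ → ℝ)
    (hI₁ : I₁ = {x | x ∈ I ∧ α < b x})
    (hI₂ : I₂ = {x | x ∈ I ∧ b x < α})
    (ha : a = ((volume I₁).toReal - (volume I₂).toReal) / (2 * r))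
    (hf : f = fun y => (2 * r) ^ (-1 / p) *
        (Set.indicator I₁ (fun _ => (1 : ℝ)) y - Set.indicator I₂ (fun _ => (1 : ℝ)) y -
          a * Set.indicator I (fun _ => (1 : ℝ)) y)) :
    (∫ y : ℝ, f y) = 0 ∧
    |a| ≤ 1 / 2 ∧
    Function.support f ⊆ I ∧
    (∀ y ∈ I, 0 ≤ f y * (b y - α)) ∧
    (∀ y ∈ I₁ ∪ I₂,
      (2 * r) ^ (-1 / p) / 2 ≤ |f y| ∧ |f y| ≤ 5 / 2 * (2 * r) ^ (-1 / p)) ∧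
    eLpNorm f (ENNReal.ofReal p) volume ≤ ENNReal.ofReal (5 / 2) := by
  subst hI₁ hI₂
  obtain rfl : f = medianTestFunction I b α a ((2 * r) ^ (-1 / p)) := hf
  have hc : 0 ≤ (2 * r) ^ (-1 / p) := by positivity
  have hr2 : 0 < 2 * r := by positivity
  have hvolI : volume I = ENNReal.ofReal (2 * r) := by rw [hI, Real.volume_Ioo]; ring_nf
  have hμI : volume I ≠ ∞ := hvolI ▸ ENNReal.ofReal_ne_top
  have hvolI_real : volume.real I = 2 * r := by
    rw [measureReal_def, hvolI, ENNReal.toReal_ofReal hr2.le]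
  have hIm : MeasurableSet I := hI ▸ measurableSet_Ioo
  have ha_mean : a * volume.real I =
      volume.real {x | x ∈ I ∧ α < b x} - volume.real {x | x ∈ I ∧ b x < α} := by
    rw [ha, hvolI_real, div_mul_cancel₀ _ hr2.ne']
    rfl
  have habs : |a| ≤ 1 / 2 := by
    have := abs_measureReal_sub_le_half hμI hα.1 hα.2
    rw [← ha_mean, abs_mul, abs_of_nonneg measureReal_nonneg, hvolI_real] at this
    nlinarith
  have habs_le : (1 + |a|) * (2 * r) ^ (-1 / p) ≤ 5 / 2 * (2 * r) ^ (-1 / p) := by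
    gcongr; linarith
  refine ⟨integral_medianTestFunction hIm.nullMeasurableSet hμI
      hb.aestronglyMeasurable.aemeasurable ha_mean, habs, support_medianTestFunction_subset,
    fun y _ => medianTestFunction_mul_nonneg (by linarith) hc y,
    fun y hy => ⟨le_trans (by nlinarith) (le_abs_medianTestFunction hc hy),
      (abs_medianTestFunction_le hc y).trans habs_le⟩, ?_⟩
  calc eLpNorm _ (ENNReal.ofReal p) volume
      ≤ volume I ^ (ENNReal.ofReal p).toReal⁻¹ * ENNReal.ofReal (5 / 2 * (2 * r) ^ (-1 / p)) :=
        (eLpNorm_medianTestFunction_le hIm hc _).trans (by gcongr)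
    _ = ENNReal.ofReal (5 / 2) := by
        rw [hvolI, ENNReal.toReal_ofReal (by linarith),
          ENNReal.ofReal_rpow_inv_mul_ofReal_mul_rpow_neg_one_div hr2 p]
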